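/- Let G = (V,E) and H = (V,F) be graphs on the same vertex set with F ⊆ E, let α ∈ [1/2, 1], and let a ∈ ℝ. Then the number of eigenvalues of A_α(H) in [0, a) is at least the number of eigenvalues of A_α(G) in [0, a), and the number of eigenvalues of A_α(G) in [a, ∞) is at least the number of eigenvalues of A_α(H) in [a, ∞) (all counted with multiplicity). -/

import Mathlib

/-!
For `α ≥ 1/2`, `A_α(G) = ½(D + A) + (α - ½)(D - A)`: a positive multiple of the signless
Laplacian `D + A = N Nᵀ` (`N` the vertex-edge incidence matrix) plus a nonnegative multiple of
the Laplacian, hence positive semidefinite. Since `A_α` is additive over edge-disjoint graphs,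
`A_α(G) - A_α(H) = A_α(G \ H) ⪰ 0`.

If `S ⪯ T`, then on the span of the eigenvectors of `S` with eigenvalue `≥ a` the quadratic form
of `T` is `≥ a‖x‖²`, while on the span of the eigenvectors of `T` with eigenvalue `< a` it is
`< a‖x‖²` away from `0`. The two spans therefore meet only in `0`, and counting dimensions gives
`m_S[a, ∞) ≤ m_T[a, ∞)`. As all eigenvalues are nonnegative, `m[0, a)` is the complementary count.
-/

/-- The `A_α`-matrix of a graph: `α·D(G) + (1-α)·A(G)`. -/
noncomputable def Aalpha {n : ℕ} (α : ℝ) (G : SimpleGraph (Fin n)) [DecidableRel G.Adj] :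
    Matrix (Fin n) (Fin n) ℝ :=
  α • Matrix.diagonal (fun v => (G.degree v : ℝ)) + (1 - α) • G.adjMatrix ℝ

lemma Aalpha_isHermitian {n : ℕ} (α : ℝ) (G : SimpleGraph (Fin n)) [DecidableRel G.Adj] :
    (Aalpha α G).IsHermitian := by
  apply Matrix.IsHermitian.ext
  intro i j
  by_cases h : G.Adj i j <;> by_cases hij : i = j <;>
    simp_all [Aalpha, Matrix.diagonal_apply, SimpleGraph.adj_comm, eq_comm]

open Finset Module Submodule
open scoped RealInnerProductSpace

variable {ι E : Type*} [Fintype ι] [NormedAddCommGroup E] [InnerProductSpace ℝ E]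

namespace OrthonormalBasis

variable (b : OrthonormalBasis ι ℝ E)

lemma inner_eq_zero_of_mem_span_image {s : Set ι} {x : E} (hx : x ∈ span ℝ (b '' s)) {i : ι}
    (hi : i ∉ s) : ⟪b i, x⟫ = 0 := by
  have hspan : span ℝ (b '' s) ≤ LinearMap.ker (innerₛₗ ℝ (b i)) := by
    refine span_le.2 ?_
    rintro _ ⟨j, hj, rfl⟩
    exact b.orthonormal.2 fun hij => hi (hij ▸ hj)
  exact hspan hx

lemma finrank_span_image (s : Finset ι) : finrank ℝ (span ℝ (b '' s)) = #s := by
  rw [Set.image_eq_range]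
  exact (finrank_span_eq_card (b.orthonormal.linearIndependent.comp _ Subtype.val_injective)).trans
    (Fintype.card_coe s)

end OrthonormalBasis

section EigenvalueCount

variable {b : OrthonormalBasis ι ℝ E} {μ : ι → ℝ} {T : E →ₗ[ℝ] E}

lemma inner_apply_self_eq_sum_eigenvalues (hT : ∀ i, T (b i) = μ i • b i) (x : E) :
    ⟪T x, x⟫ = ∑ i, μ i * ⟪b i, x⟫ ^ 2 := by
  nth_rw 1 [← b.sum_repr' x]
  simp only [map_sum, map_smul, hT, smul_smul, sum_inner, real_inner_smul_left]
  exact sum_congr rfl fun i _ => by ring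

variable {s : Finset ι} {x : E} {a : ℝ}

lemma mul_norm_sq_le_inner_apply_self (hT : ∀ i, T (b i) = μ i • b i) (hs : ∀ i ∈ s, a ≤ μ i)
    (hx : x ∈ span ℝ (b '' s)) : a * ‖x‖ ^ 2 ≤ ⟪T x, x⟫ := by
  rw [inner_apply_self_eq_sum_eigenvalues hT, ← b.sum_sq_inner_right, mul_sum]
  refine sum_le_sum fun i _ => ?_
  by_cases hi : i ∈ s
  · exact mul_le_mul_of_nonneg_right (hs i hi) (sq_nonneg _)
  · simp [b.inner_eq_zero_of_mem_span_image hx (mod_cast hi)]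

lemma inner_apply_self_lt_mul_norm_sq (hT : ∀ i, T (b i) = μ i • b i) (hs : ∀ i ∈ s, μ i < a)
    (hx : x ∈ span ℝ (b '' s)) (hx0 : x ≠ 0) : ⟪T x, x⟫ < a * ‖x‖ ^ 2 := by
  obtain ⟨j, hj⟩ : ∃ j, ⟪b j, x⟫ ≠ 0 := by
    by_contra! h
    exact hx0 (by simpa [h] using (b.sum_sq_inner_right x).symm)
  have hjs : j ∈ s := by
    by_contra hjs
    exact hj (b.inner_eq_zero_of_mem_span_image hx (mod_cast hjs))
  rw [inner_apply_self_eq_sum_eigenvalues hT, ← b.sum_sq_inner_right, mul_sum]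
  refine sum_lt_sum (fun i _ => ?_) ⟨j, mem_univ j, ?_⟩
  · by_cases hi : i ∈ s
    · exact mul_le_mul_of_nonneg_right (hs i hi).le (sq_nonneg _)
    · simp [b.inner_eq_zero_of_mem_span_image hx (mod_cast hi)]
  · exact mul_lt_mul_of_pos_right (hs j hjs) (by positivity)

lemma finrank_le_card_eigenvalues_ge (hT : ∀ i, T (b i) = μ i • b i)
    {S : Submodule ℝ E} (hS : ∀ x ∈ S, a * ‖x‖ ^ 2 ≤ ⟪T x, x⟫) :
    finrank ℝ S ≤ #{i | a ≤ μ i} := by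
  have : FiniteDimensional ℝ E := .of_basis b.toBasis
  have hdisj : Disjoint S (span ℝ (b '' ↑({i | μ i < a} : Finset ι))) := by
    refine Submodule.disjoint_def.2 fun x hxS hxU => ?_
    by_contra hx0
    exact (hS x hxS).not_gt <|
      inner_apply_self_lt_mul_norm_sq hT (fun i hi => (mem_filter.1 hi).2) hxU hx0
  have hdim := Submodule.finrank_add_finrank_le_of_disjoint hdisj
  rw [b.finrank_span_image, finrank_eq_card_basis b.toBasis] at hdim
  have hsplit := card_filter_add_card_filter_not (s := univ) (fun i => a ≤ μ i)
  simp only [not_le, card_univ] at hsplit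
  omega

lemma card_eigenvalues_ge_le_of_le {ι' : Type*} [Fintype ι'] {b' : OrthonormalBasis ι' ℝ E}
    {μ' : ι' → ℝ} {S : E →ₗ[ℝ] E} (hS : ∀ i, S (b' i) = μ' i • b' i) (hT : ∀ i, T (b i) = μ i • b i)
    (hST : S ≤ T) (a : ℝ) : #{i | a ≤ μ' i} ≤ #{i | a ≤ μ i} := by
  rw [← b'.finrank_span_image]
  refine finrank_le_card_eigenvalues_ge hT fun x hx => ?_
  calc a * ‖x‖ ^ 2 ≤ ⟪S x, x⟫ :=
        mul_norm_sq_le_inner_apply_self hS (fun i hi => (mem_filter.1 hi).2) hx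
    _ ≤ ⟪T x, x⟫ := by
        have h := ((LinearMap.le_def S T).1 hST).inner_nonneg_left x
        rw [LinearMap.sub_apply, inner_sub_left] at h
        linarith

end EigenvalueCount

namespace Matrix.IsHermitian

variable {n : Type*} [Fintype n] [DecidableEq n] {A B : Matrix n n ℝ}

lemma toEuclideanLin_eigenvectorBasis (hA : A.IsHermitian) (i : n) :
    toEuclideanLin A (hA.eigenvectorBasis i) = hA.eigenvalues i • hA.eigenvectorBasis i := by
  ext1
  simp [hA.mulVec_eigenvectorBasis]

lemma card_eigenvalues_ge_le_of_posSemidef_sub (hA : A.IsHermitian) (hB : B.IsHermitian)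
    (hAB : (A - B).PosSemidef) (a : ℝ) :
    #{i | a ≤ hB.eigenvalues i} ≤ #{i | a ≤ hA.eigenvalues i} :=
  card_eigenvalues_ge_le_of_le hB.toEuclideanLin_eigenvectorBasis
    hA.toEuclideanLin_eigenvectorBasis
    (by rwa [LinearMap.le_def, ← map_sub, isPositive_toEuclideanLin_iff]) a

lemma card_eigenvalues_mem_Ico_add_card_ge (hA : A.IsHermitian) (hA₀ : A.PosSemidef) (a : ℝ) :
    #{i | 0 ≤ hA.eigenvalues i ∧ hA.eigenvalues i < a} + #{i | a ≤ hA.eigenvalues i} =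
      Fintype.card n := by
  rw [add_comm, ← card_univ, ← card_filter_add_card_filter_not (s := univ)
    (fun i => a ≤ hA.eigenvalues i)]
  congr 2
  refine filter_congr fun i _ => ?_
  simp only [not_le]
  exact ⟨And.right, fun h => ⟨hA₀.eigenvalues_nonneg i, h⟩⟩

end Matrix.IsHermitian

namespace SimpleGraph

open Matrix

variable {V : Type*} {G H : SimpleGraph V} [DecidableRel G.Adj] [DecidableRel H.Adj]

lemma adjMatrix_sdiff_add_adjMatrix (R : Type*) [AddZeroClass R] [One R] (h : H ≤ G) :
    (G \ H).adjMatrix R + H.adjMatrix R = G.adjMatrix R := by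
  ext i j
  by_cases hH : H.Adj i j
  · simp [adjMatrix_apply, hH, h hH]
  · simp [adjMatrix_apply, hH]

variable [Fintype V] [DecidableEq V]

lemma degMatrix_add_adjMatrix_eq_incMatrix_mul_transpose (R : Type*) [Semiring R] :
    G.degMatrix R + G.adjMatrix R = G.incMatrix R * (G.incMatrix R)ᵀ := by
  rw [incMatrix_mul_transpose]
  ext i j
  by_cases hij : i = j
  · simp [hij, degMatrix]
  · simp [hij, degMatrix, adjMatrix_apply]

lemma posSemidef_degMatrix_add_adjMatrix : (G.degMatrix ℝ + G.adjMatrix ℝ).PosSemidef := by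
  rw [degMatrix_add_adjMatrix_eq_incMatrix_mul_transpose, ← conjTranspose_eq_transpose_of_trivial]
  exact posSemidef_self_mul_conjTranspose _

lemma degree_sdiff_add_degree (h : H ≤ G) (v : V) :
    (G \ H).degree v + H.degree v = G.degree v := by
  simp only [← card_neighborFinset_eq_degree, neighborFinset_sdiff]
  exact card_sdiff_add_card_eq_card fun w hw => by simpa using h (by simpa using hw)

lemma degMatrix_sdiff_add_degMatrix (R : Type*) [AddMonoidWithOne R] (h : H ≤ G) :
    (G \ H).degMatrix R + H.degMatrix R = G.degMatrix R := by
  simp only [degMatrix, diagonal_add, ← Nat.cast_add, degree_sdiff_add_degree h]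

end SimpleGraph

section Aalpha

open SimpleGraph

variable {n : ℕ} {α : ℝ} {G H : SimpleGraph (Fin n)} [DecidableRel G.Adj] [DecidableRel H.Adj]

lemma Aalpha_eq_smul_degMatrix_add_smul_adjMatrix :
    Aalpha α G = α • G.degMatrix ℝ + (1 - α) • G.adjMatrix ℝ :=
  rfl

lemma Aalpha_eq_smul_signless_add_smul_lapMatrix :
    Aalpha α G = (1 / 2 : ℝ) • (G.degMatrix ℝ + G.adjMatrix ℝ) + (α - 1 / 2) • G.lapMatrix ℝ := by
  rw [Aalpha_eq_smul_degMatrix_add_smul_adjMatrix, lapMatrix]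
  module

lemma Aalpha_posSemidef (hα : 1 / 2 ≤ α) : (Aalpha α G).PosSemidef := by
  rw [Aalpha_eq_smul_signless_add_smul_lapMatrix]
  exact (posSemidef_degMatrix_add_adjMatrix.smul (by norm_num)).add
    ((G.posSemidef_lapMatrix ℝ).smul (sub_nonneg.2 hα))

lemma Aalpha_sdiff_add_Aalpha (h : H ≤ G) : Aalpha α (G \ H) + Aalpha α H = Aalpha α G := by
  simp only [Aalpha_eq_smul_degMatrix_add_smul_adjMatrix, ← degMatrix_sdiff_add_degMatrix ℝ h,
    ← adjMatrix_sdiff_add_adjMatrix ℝ h, smul_add]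
  abel

end Aalpha

open Finset in
theorem Aalpha_subgraph_eigenvalue_count_general (n : ℕ)
    (G : SimpleGraph (Fin n)) [DecidableRel G.Adj]
    (H : SimpleGraph (Fin n)) [DecidableRel H.Adj] (hHG : H ≤ G)
    (α : ℝ) (hα0 : 1 / 2 ≤ α) (a : ℝ) :
    (univ.filter fun i : Fin n =>
        0 ≤ (Aalpha_isHermitian α G).eigenvalues i ∧
          (Aalpha_isHermitian α G).eigenvalues i < a).card ≤
      (univ.filter fun i : Fin n =>
        0 ≤ (Aalpha_isHermitian α H).eigenvalues i ∧
          (Aalpha_isHermitian α H).eigenvalues i < a).card ∧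
    (univ.filter fun i : Fin n =>
        a ≤ (Aalpha_isHermitian α H).eigenvalues i).card ≤
      (univ.filter fun i : Fin n =>
        a ≤ (Aalpha_isHermitian α G).eigenvalues i).card := by
  have hGH : (Aalpha α G - Aalpha α H).PosSemidef := by
    rw [← Aalpha_sdiff_add_Aalpha hHG, add_sub_cancel_right]
    exact Aalpha_posSemidef hα0
  have hge := (Aalpha_isHermitian α G).card_eigenvalues_ge_le_of_posSemidef_sub
    (Aalpha_isHermitian α H) hGH a
  have hG := (Aalpha_isHermitian α G).card_eigenvalues_mem_Ico_add_card_ge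
    (Aalpha_posSemidef hα0) a
  have hH := (Aalpha_isHermitian α H).card_eigenvalues_mem_Ico_add_card_ge
    (Aalpha_posSemidef hα0) a
  exact ⟨by omega, hge⟩

open Finset in
/-- If `H` is a spanning subgraph of `G` (same vertex set, `F ⊆ E`) and `α ∈ [1/2, 1]`,
then for any `a ∈ ℝ`, `m_{A_α(H)}[0, a) ≥ m_{A_α(G)}[0, a)` and
`m_{A_α(G)}[a, ∞) ≥ m_{A_α(H)}[a, ∞)` (with multiplicity). -/
theorem Aalpha_subgraph_eigenvalue_count (n : ℕ)
    (G : SimpleGraph (Fin n)) [DecidableRel G.Adj]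
    (H : SimpleGraph (Fin n)) [DecidableRel H.Adj] (hHG : H ≤ G)
    (α : ℝ) (hα0 : 1 / 2 ≤ α) (hα1 : α ≤ 1) (a : ℝ) :
    (univ.filter fun i : Fin n =>
        0 ≤ (Aalpha_isHermitian α G).eigenvalues i ∧
          (Aalpha_isHermitian α G).eigenvalues i < a).card ≤
      (univ.filter fun i : Fin n =>
        0 ≤ (Aalpha_isHermitian α H).eigenvalues i ∧
          (Aalpha_isHermitian α H).eigenvalues i < a).card ∧
    (univ.filter fun i : Fin n =>
        a ≤ (Aalpha_isHermitian α H).eigenvalues i).card ≤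
      (univ.filter fun i : Fin n =>
        a ≤ (Aalpha_isHermitian α G).eigenvalues i).card :=
  Aalpha_subgraph_eigenvalue_count_general n G H hHG α hα0 a
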